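/- arXiv:math/0109179 — 3 statements merged into one kernel-verified Lean document; each statement's English description precedes it below -/
import Mathlib

section
/- Let n ≥ 3, let d_1 ≤ d_2 ≤ … ≤ d_{n+1} be integers with d_1 ≥ 2, and suppose d_2 + … + d_n < d_1 + d_{n+1} + n. Set d = d_1 + … + d_n. Then for every integer i with 3 ≤ i ≤ n−1 and every choice of indices 1 ≤ r_1 < r_2 < … < r_i ≤ n, the equality d − d_{n+1} − n + 2i = 2(d_{r_1} + … + d_{r_i}) is impossible. -/
open Finset

/-- With 2 ≤ d_1 ≤ … ≤ d_{n+1}, n ≥ 3,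
d_2 + … + d_n < d_1 + d_{n+1} + n and d = d_1 + … + d_n, for every
3 ≤ i ≤ n−1 and every choice of indices 1 ≤ r_1 < … < r_i ≤ n,
the equality d − d_{n+1} − n + 2i = 2(d_{r_1} + … + d_{r_i}) is impossible. -/
theorem stmt_2 (n : ℕ) (hn : 3 ≤ n) (d : ℕ → ℤ)
    (hd1 : 2 ≤ d 1)
    (hmono : ∀ i j, 1 ≤ i → i ≤ j → j ≤ n + 1 → d i ≤ d j)
    (hgrowth : (∑ i ∈ Finset.Icc 2 n, d i) < d 1 + d (n + 1) + n) :
    ∀ i : ℕ, 3 ≤ i → i ≤ n - 1 →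
      ∀ S : Finset ℕ, S ⊆ Finset.Icc 1 n → S.card = i →
        (∑ j ∈ Finset.Icc 1 n, d j) - d (n + 1) - n + 2 * i ≠ 2 * ∑ r ∈ S, d r := by
  intro i hi3 _ S hS hcard heq
  -- split off the first term of the full sum
  have hsplit : Finset.Icc 1 n = insert 1 (Finset.Icc 2 n) := by
    ext x; simp only [Finset.mem_Icc, Finset.mem_insert]; omega
  have hD : (∑ j ∈ Finset.Icc 1 n, d j) = d 1 + ∑ j ∈ Finset.Icc 2 n, d j := by
    rw [hsplit, Finset.sum_insert (by simp)]
  -- lower bound on the sum over S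
  have hlb : (i : ℤ) * d 1 ≤ ∑ r ∈ S, d r := by
    calc (i : ℤ) * d 1 = ∑ _r ∈ S, d 1 := by rw [Finset.sum_const, ← hcard]; push_cast; ring
    _ ≤ ∑ r ∈ S, d r := by
        apply Finset.sum_le_sum
        intro r hr
        have := hS hr
        simp only [Finset.mem_Icc] at this
        exact hmono 1 r le_rfl this.1 (by omega)
  have hD' : (∑ j ∈ Finset.Icc 1 n, d j) < 2 * d 1 + d (n + 1) + n := by
    rw [hD]; linarith
  have hi3' : (3 : ℤ) ≤ (i : ℤ) := by exact_mod_cast hi3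
  nlinarith [hlb, hD', hd1, hi3']
end

section
/- Let n ≥ 2 and let d_1 ≤ … ≤ d_{n+1} be positive integers with 2 ≤ d_{n+1} ≤ d_1 + … + d_n − n. Let h_J : ℤ → ℤ be the Hilbert function of a complete intersection of type (d_1,…,d_n) in n variables, i.e. h_J(t) is the coefficient of x^t in ∏_{i=1}^n (1 + x + … + x^{d_i − 1}). Then the largest integer j with h_J(j) > h_J(j − d_{n+1}) equals ⌊( (Σ_{i=1}^{n+1} d_i) − n − 1 )/2⌋. -/
open Finset Polynomial

/-- Hilbert function of partial products -/
noncomputable def Hc (d : ℕ → ℕ) (m : ℕ) (t : ℤ) : ℤ :=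
  if 0 ≤ t then
    (∏ i ∈ Finset.Icc 1 m,
      ∑ k ∈ Finset.range (d i), (Polynomial.X : Polynomial ℤ) ^ k).coeff t.toNat
  else 0

/-- socle degree of partial products -/
def Dg (d : ℕ → ℕ) (m : ℕ) : ℤ := ∑ i ∈ Finset.Icc 1 m, ((d i : ℤ) - 1)

lemma Hc_neg (d : ℕ → ℕ) (m : ℕ) (t : ℤ) (ht : t < 0) : Hc d m t = 0 := by
  simp [Hc, not_le.mpr ht]

lemma Hc_zero (d : ℕ → ℕ) (t : ℤ) : Hc d 0 t = if t = 0 then 1 else 0 := by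
  unfold Hc
  rw [show Finset.Icc 1 0 = (∅ : Finset ℕ) from rfl]
  rw [Finset.prod_empty, Polynomial.coeff_one]
  split_ifs <;> omega

lemma Dg_zero (d : ℕ → ℕ) : Dg d 0 = 0 := by simp [Dg]

lemma Dg_succ (d : ℕ → ℕ) (m : ℕ) : Dg d (m+1) = Dg d m + ((d (m+1) : ℤ) - 1) :=
  Finset.sum_Icc_succ_top (by omega) _

lemma Dg_nonneg (d : ℕ → ℕ) (m : ℕ) (hd : ∀ i, 1 ≤ i → i ≤ m → 1 ≤ d i) :
    0 ≤ Dg d m := by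
  apply Finset.sum_nonneg
  intro i hi
  rw [Finset.mem_Icc] at hi
  have := hd i hi.1 hi.2
  omega

lemma Hc_succ (d : ℕ → ℕ) (m : ℕ) (t : ℤ) :
    Hc d (m+1) t = ∑ k ∈ Finset.range (d (m+1)), Hc d m (t - (k : ℤ)) := by
  rcases lt_or_ge t 0 with ht | ht
  · rw [Hc_neg d _ t ht, eq_comm]
    apply Finset.sum_eq_zero
    intro k _
    apply Hc_neg
    omega
  · unfold Hc
    rw [Finset.prod_Icc_succ_top (by omega : 1 ≤ m + 1), Finset.mul_sum,
      Polynomial.finset_sum_coeff, if_pos ht]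
    apply Finset.sum_congr rfl
    intro k hk
    rw [Polynomial.coeff_mul_X_pow']
    by_cases h1 : (k : ℤ) ≤ t
    · rw [if_pos (by omega : k ≤ t.toNat), if_pos (by omega : (0:ℤ) ≤ t - k)]
      congr 1
      omega
    · rw [if_neg (by omega : ¬ k ≤ t.toNat), if_neg (by omega : ¬ (0:ℤ) ≤ t - k)]

lemma Hc_nonneg (d : ℕ → ℕ) (m : ℕ) (t : ℤ) : 0 ≤ Hc d m t := by
  induction m generalizing t with
  | zero => rw [Hc_zero]; split_ifs <;> omega
  | succ m ih =>
    rw [Hc_succ]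
    exact Finset.sum_nonneg fun k _ => ih _

lemma Hc_symm (d : ℕ → ℕ) (m : ℕ) (t : ℤ) : Hc d m (Dg d m - t) = Hc d m t := by
  induction m generalizing t with
  | zero =>
    rw [Hc_zero, Hc_zero, Dg_zero]
    split_ifs <;> omega
  | succ m ih =>
    rw [Hc_succ, Hc_succ,
      ← Finset.sum_range_reflect (fun k => Hc d m (Dg d (m+1) - t - (k:ℤ))) (d (m+1))]
    apply Finset.sum_congr rfl
    intro k hk
    rw [Finset.mem_range] at hk
    have hc : Dg d (m+1) - t - ((d (m+1) - 1 - k : ℕ) : ℤ) = Dg d m - (t - (k:ℤ)) := by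
      have := Dg_succ d m
      omega
    rw [hc, ih]

lemma Hc_zero_of_gt (d : ℕ → ℕ) (m : ℕ) (t : ℤ) (ht : Dg d m < t) : Hc d m t = 0 := by
  rw [← Hc_symm d m t]
  exact Hc_neg d m _ (by omega)

lemma Hc_pos (d : ℕ → ℕ) (m : ℕ) (hd : ∀ i, 1 ≤ i → i ≤ m → 1 ≤ d i) (t : ℤ)
    (h0 : 0 ≤ t) (h1 : t ≤ Dg d m) : 0 < Hc d m t := by
  induction m generalizing t with
  | zero =>
    have hDg := Dg_zero d
    rw [Hc_zero]
    split_ifs <;> omega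
  | succ m ih =>
    have hd' : ∀ i, 1 ≤ i → i ≤ m → 1 ≤ d i := fun i a b => hd i a (by omega)
    have hDnn : 0 ≤ Dg d m := Dg_nonneg d m hd'
    have hDs := Dg_succ d m
    have hK : 1 ≤ d (m+1) := hd (m+1) (by omega) le_rfl
    rw [Hc_succ]
    have hk0 : (t - Dg d m).toNat ∈ Finset.range (d (m+1)) := by
      rw [Finset.mem_range]; omega
    calc (0:ℤ) < Hc d m (t - ((t - Dg d m).toNat : ℤ)) := by
          apply ih hd' _ (by omega) (by omega)
      _ ≤ ∑ k ∈ Finset.range (d (m+1)), Hc d m (t - (k:ℤ)) :=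
          Finset.single_le_sum (fun k _ => Hc_nonneg d m _) hk0

lemma Hc_step (d : ℕ → ℕ) (m : ℕ) (u : ℤ) :
    Hc d (m+1) u - Hc d (m+1) (u-1) = Hc d m u - Hc d m (u - (d (m+1) : ℤ)) := by
  rw [Hc_succ, Hc_succ, ← Finset.sum_sub_distrib]
  have h : ∀ k ∈ Finset.range (d (m+1)),
      Hc d m (u - (k:ℤ)) - Hc d m (u - 1 - (k:ℤ))
        = (fun j : ℕ => Hc d m (u - (j:ℤ))) k - (fun j : ℕ => Hc d m (u - (j:ℤ))) (k+1) := by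
    intro k _
    have hx : u - 1 - (k:ℤ) = u - ((k+1 : ℕ) : ℤ) := by push_cast; ring
    simp only [hx]
  rw [Finset.sum_congr rfl h, Finset.sum_range_sub' (fun j : ℕ => Hc d m (u - (j:ℤ)))]
  norm_num

lemma Hc_mono (d : ℕ → ℕ) (m : ℕ) :
    ∀ s t : ℤ, s ≤ t → s + t ≤ Dg d m → Hc d m s ≤ Hc d m t := by
  induction m with
  | zero =>
    intro s t hst hsum
    have hDg := Dg_zero d
    rcases lt_or_ge s 0 with h | h
    · rw [Hc_neg d 0 s h]; exact Hc_nonneg d 0 t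
    · have hs : s = 0 := by omega
      have ht : t = 0 := by omega
      rw [hs, ht]
  | succ m ih =>
    have hDs := Dg_succ d m
    have step : ∀ u : ℤ, 2*u ≤ Dg d (m+1) → Hc d (m+1) (u-1) ≤ Hc d (m+1) u := by
      intro u hu
      have h1 := Hc_step d m u
      have h2 : Hc d m (u - (d (m+1):ℤ)) ≤ Hc d m u := ih _ _ (by omega) (by omega)
      omega
    suffices H : ∀ N : ℕ, ∀ s t : ℤ, t - s ≤ (N:ℤ) → s ≤ t → s + t ≤ Dg d (m+1) →
        Hc d (m+1) s ≤ Hc d (m+1) t by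
      intro s t h1 h2
      exact H (t - s).toNat s t (by omega) h1 h2
    intro N
    induction N with
    | zero =>
      intro s t h1 h2 h3
      have hst : s = t := by omega
      rw [hst]
    | succ N ihN =>
      intro s t h1 h2 h3
      rcases eq_or_lt_of_le h2 with rfl | hlt
      · exact le_refl _
      rcases lt_or_ge s 0 with hs | hs
      · rw [Hc_neg d _ s hs]; exact Hc_nonneg d _ t
      by_cases h2t : 2*t ≤ Dg d (m+1)
      · calc Hc d (m+1) s ≤ Hc d (m+1) (t-1) := ihN s (t-1) (by omega) (by omega) (by omega)
          _ ≤ Hc d (m+1) t := step t h2t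
      · rw [← Hc_symm d (m+1) t]
        exact ihN s (Dg d (m+1) - t) (by omega) (by omega) (by omega)

lemma Hc_strict (d : ℕ → ℕ) :
    ∀ m : ℕ, 1 ≤ m → (∀ i, 1 ≤ i → i ≤ m → 1 ≤ d i) →
    (∀ i j, 1 ≤ i → i ≤ j → j ≤ m → d i ≤ d j) →
    ∀ E t : ℤ, (d m : ℤ) ≤ E → 0 ≤ t → t ≤ Dg d m → 2*t ≤ Dg d m + E - 1 →
    Hc d m (t - E) < Hc d m t := by
  intro m
  induction m with
  | zero => intro h; omega
  | succ m ih =>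
    intro _ hd hmono E t hE ht0 ht1 ht2
    rcases Nat.eq_zero_or_pos m with rfl | hm1
    · -- level 1 : t - E < 0
      have hDg : Dg d (0+1) = Dg d 0 + ((d (0+1) : ℤ) - 1) := Dg_succ d 0
      rw [Dg_zero] at hDg
      have hneg : t - E < 0 := by omega
      rw [Hc_neg d _ _ hneg]
      exact Hc_pos d (0+1) hd t ht0 ht1
    · have hDs := Dg_succ d m
      have hd' : ∀ i, 1 ≤ i → i ≤ m → 1 ≤ d i := fun i a b => hd i a (by omega)
      have hmono' : ∀ i j, 1 ≤ i → i ≤ j → j ≤ m → d i ≤ d j :=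
        fun i j a b c => hmono i j a b (by omega)
      have hK : 1 ≤ d (m+1) := hd (m+1) (by omega) le_rfl
      have hdm : (d m : ℤ) ≤ (d (m+1) : ℤ) := by
        exact_mod_cast hmono m (m+1) hm1 (by omega) le_rfl
      rw [Hc_succ, Hc_succ,
        ← Finset.sum_range_reflect (fun k => Hc d m (t - E - (k:ℤ))) (d (m+1))]
      apply Finset.sum_lt_sum
      · intro k hk
        rw [Finset.mem_range] at hk
        exact Hc_mono d m _ _ (by omega) (by omega)
      · by_cases hc : t ≤ Dg d m
        · refine ⟨0, Finset.mem_range.mpr (by omega), ?_⟩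
          have harg : t - E - ((d (m+1) - 1 - 0 : ℕ) : ℤ) = t - (E + (d (m+1):ℤ) - 1) := by
            omega
          have harg2 : t - ((0:ℕ):ℤ) = t := by norm_num
          rw [harg, harg2]
          exact ih hm1 hd' hmono' (E + (d (m+1):ℤ) - 1) t (by omega) ht0 hc (by omega)
        · push_neg at hc
          refine ⟨(t - Dg d m).toNat, Finset.mem_range.mpr (by omega), ?_⟩
          have harg : t - E - ((d (m+1) - 1 - (t - Dg d m).toNat : ℕ) : ℤ) < 0 := by omega
          rw [Hc_neg d m _ harg]
          have harg2 : t - ((t - Dg d m).toNat : ℤ) = Dg d m := by omega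
          rw [harg2]
          exact Hc_pos d m hd' _ (Dg_nonneg d m hd') le_rfl

/-- Let n ≥ 2 and d_1 ≤ … ≤ d_{n+1} positive integers with
2 ≤ d_{n+1} ≤ d_1 + … + d_n − n.  Let h_J(t) be the coefficient of x^t in
∏_{i=1}^n (1 + x + … + x^{d_i−1}).  Then the largest integer j with
h_J(j) > h_J(j − d_{n+1}) equals ⌊((Σ_{i=1}^{n+1} d_i) − n − 1)/2⌋. -/
theorem stmt_14 (n : ℕ) (hn : 2 ≤ n) (d : ℕ → ℕ)
    (hpos : ∀ i, 1 ≤ i → i ≤ n + 1 → 1 ≤ d i)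
    (hmono : ∀ i j, 1 ≤ i → i ≤ j → j ≤ n + 1 → d i ≤ d j)
    (hd2 : 2 ≤ d (n + 1))
    (hbound : (d (n + 1) : ℤ) ≤ (∑ i ∈ Finset.Icc 1 n, (d i : ℤ)) - n)
    (hJ : ℤ → ℤ)
    (hhJ : ∀ t : ℤ, hJ t =
      if 0 ≤ t then
        (∏ i ∈ Finset.Icc 1 n,
          ∑ k ∈ Finset.range (d i), (Polynomial.X : Polynomial ℤ) ^ k).coeff t.toNat
      else 0) :
    IsGreatest {j : ℤ | hJ (j - d (n + 1)) < hJ j}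
      (((∑ i ∈ Finset.Icc 1 (n + 1), (d i : ℤ)) - n - 1) / 2) := by
  have hJH : ∀ t : ℤ, hJ t = Hc d n t := by
    intro t; rw [hhJ t]; rfl
  obtain ⟨m, rfl⟩ : ∃ m, n = m + 1 := ⟨n - 1, by omega⟩
  have hm1 : 1 ≤ m := by omega
  have hd' : ∀ i, 1 ≤ i → i ≤ m + 1 → 1 ≤ d i := fun i a b => hpos i a (by omega)
  have hmono' : ∀ i j, 1 ≤ i → i ≤ j → j ≤ m + 1 → d i ≤ d j :=
    fun i j a b c => hmono i j a b (by omega)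
  have hd'' : ∀ i, 1 ≤ i → i ≤ m → 1 ≤ d i := fun i a b => hpos i a (by omega)
  have hmono'' : ∀ i j, 1 ≤ i → i ≤ j → j ≤ m → d i ≤ d j :=
    fun i j a b c => hmono i j a b (by omega)
  have hDs := Dg_succ d m
  have hDm0 : 0 ≤ Dg d m := Dg_nonneg d m hd''
  have hDval : Dg d (m+1) = (∑ i ∈ Finset.Icc 1 (m+1), (d i : ℤ)) - ((m:ℤ)+1) := by
    unfold Dg
    rw [Finset.sum_sub_distrib, Finset.sum_const, Nat.card_Icc]
    norm_num
  have he2 : (2:ℤ) ≤ (d (m+1+1) : ℤ) := by exact_mod_cast hd2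
  have heD : (d (m+1+1):ℤ) ≤ Dg d (m+1) := by
    rw [hDval]; push_cast at hbound ⊢; linarith
  have hdne : (d (m+1) : ℤ) ≤ (d (m+1+1) : ℤ) := by
    exact_mod_cast hmono (m+1) (m+1+1) (by omega) (by omega) (by omega)
  have hdm12 : (d m : ℤ) ≤ (d (m+1) : ℤ) := by
    exact_mod_cast hmono m (m+1) hm1 (by omega) (by omega)
  have hsumtop : (∑ i ∈ Finset.Icc 1 (m+1+1), (d i:ℤ))
      = (∑ i ∈ Finset.Icc 1 (m+1), (d i:ℤ)) + (d (m+1+1):ℤ) :=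
    Finset.sum_Icc_succ_top (by omega) _
  set M : ℤ := ((∑ i ∈ Finset.Icc 1 (m+1+1), (d i : ℤ)) - (↑(m+1):ℤ) - 1) / 2 with hMdef
  have hNum : (∑ i ∈ Finset.Icc 1 (m+1+1), (d i:ℤ)) - (↑(m+1):ℤ) - 1
      = Dg d (m+1) + (d (m+1+1):ℤ) - 1 := by
    rw [hsumtop, hDval]; push_cast; ring
  have hMeq : M = (Dg d (m+1) + (d (m+1+1):ℤ) - 1) / 2 := by rw [hMdef, hNum]
  have hdiv : 2 * M ≤ Dg d (m+1) + (d (m+1+1):ℤ) - 1 ∧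
      Dg d (m+1) + (d (m+1+1):ℤ) - 2 ≤ 2 * M := by
    constructor <;> omega
  constructor
  · show hJ (M - ↑(d (m+1+1))) < hJ M
    rw [hJH, hJH]
    rw [← Hc_symm d (m+1) M]
    set b := Dg d (m+1) - M with hbdef
    set a := M - (d (m+1+1):ℤ) with hadef
    have hgap1 : 1 ≤ b - a := by omega
    have hgap2 : b - a ≤ 2 := by omega
    have h2b : 2*b ≤ Dg d (m+1) - (d (m+1+1):ℤ) + 2 := by omega
    have hb0 : 1 ≤ b := by omega
    rcases lt_or_ge a 0 with ha | ha
    · rw [Hc_neg d (m+1) a ha]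
      exact Hc_pos d (m+1) hd' b (by omega) (by omega)
    · have hstepb : Hc d m (b - (d (m+1):ℤ)) < Hc d m b :=
        Hc_strict d m hm1 hd'' hmono'' ((d (m+1)):ℤ) b hdm12 (by omega) (by omega) (by omega)
      have hstep1 := Hc_step d m b
      rcases (show b - a = 1 ∨ b - a = 2 by omega) with hg | hg
      · have hab : a = b - 1 := by omega
        rw [hab]
        omega
      · have hab : a = b - 2 := by omega
        rw [hab]
        have hstep2 := Hc_step d m (b-1)
        rw [show b - 1 - 1 = b - 2 by ring] at hstep2
        have hw : Hc d m (b - 1 - (d (m+1):ℤ)) ≤ Hc d m (b-1) :=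
          Hc_mono d m _ _ (by omega) (by omega)
        omega
  · intro j hj
    simp only [Set.mem_setOf_eq] at hj
    rw [hJH, hJH] at hj
    by_contra hcon
    push_neg at hcon
    have h2j : Dg d (m+1) + (d (m+1+1):ℤ) ≤ 2*j := by omega
    rcases lt_or_ge (Dg d (m+1)) j with hDj | hDj
    · have h0 : Hc d (m+1) j = 0 := Hc_zero_of_gt d (m+1) j hDj
      have h1 := Hc_nonneg d (m+1) (j - (d (m+1+1):ℤ))
      omega
    · have hsym : Hc d (m+1) (Dg d (m+1) - j) = Hc d (m+1) j := Hc_symm d (m+1) j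
      have hmm2 : Hc d (m+1) (Dg d (m+1) - j) ≤ Hc d (m+1) (j - (d (m+1+1):ℤ)) :=
        Hc_mono d (m+1) _ _ (by omega) (by omega)
      omega
end

section
/- Let n = 2p ≥ 4 be even and t ≥ 1, and set ρ = ρ(t,n) = ⌈ t(t+1)···(t+p−1)(t+p+1)···(t+n−1)/(n−1)! ⌉. Then for every integer i with p+1 ≤ i ≤ n−1, one has C(t+n−1, t+i−1)·C(t+i−2, i−1) ≤ C(n−1, i−1)·ρ, and for every i with 1 ≤ i ≤ p−1, one has C(n−1, i)·ρ ≤ C(t+n−1, t+i)·C(t+i−1, i). -/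
open Finset

lemma aux_prod (t n : ℕ) : ∏ j ∈ Finset.range n, (t + j) = t.ascFactorial n := by
  induction n with
  | zero => simp
  | succ n ih => rw [Finset.prod_range_succ, ih, Nat.ascFactorial_succ, mul_comm]

lemma aux_id (u k d : ℕ) :
    (u + k + d + 1).choose (u + k + 1) * ((u + k).choose k) * (u + k + 1)
      = (k + d).choose k * ((u + 1) * ((u + k + d + 1).choose (k + d))) := by
  have h1 : u + k + 1 ≤ u + k + d + 1 := by omega
  have h2 : k ≤ u + k := by omega
  have h3 : k ≤ k + d := by omega
  have h4 : k + d ≤ u + k + d + 1 := by omega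
  have key : (((u + k + d + 1).choose (u + k + 1) * ((u + k).choose k) * (u + k + 1) : ℕ) : ℚ)
      = (((k + d).choose k * ((u + 1) * ((u + k + d + 1).choose (k + d))) : ℕ) : ℚ) := by
    push_cast
    rw [Nat.cast_choose ℚ h1, Nat.cast_choose ℚ h2, Nat.cast_choose ℚ h3, Nat.cast_choose ℚ h4]
    have e1 : u + k + d + 1 - (u + k + 1) = d := by omega
    have e2 : u + k - k = u := by omega
    have e3 : k + d - k = d := by omega
    have e4 : u + k + d + 1 - (k + d) = u + 1 := by omega
    rw [e1, e2, e3, e4, Nat.factorial_succ (u + k), Nat.factorial_succ u]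
    have f0 : (Nat.factorial u : ℚ) ≠ 0 := Nat.cast_ne_zero.mpr (Nat.factorial_ne_zero _)
    have f1 : (Nat.factorial k : ℚ) ≠ 0 := Nat.cast_ne_zero.mpr (Nat.factorial_ne_zero _)
    have f2 : (Nat.factorial d : ℚ) ≠ 0 := Nat.cast_ne_zero.mpr (Nat.factorial_ne_zero _)
    have f3 : (Nat.factorial (u+k) : ℚ) ≠ 0 := Nat.cast_ne_zero.mpr (Nat.factorial_ne_zero _)
    have f4 : (Nat.factorial (k+d) : ℚ) ≠ 0 := Nat.cast_ne_zero.mpr (Nat.factorial_ne_zero _)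
    have f5 : ((u:ℚ) + k + 1) ≠ 0 := by positivity
    have f6 : ((u:ℚ) + 1) ≠ 0 := by positivity
    push_cast
    field_simp
  exact_mod_cast key

set_option maxHeartbeats 1000000 in

/-- For even n = 2p ≥ 4, t ≥ 1 and
ρ = ⌈ t(t+1)···(t+p−1)(t+p+1)···(t+n−1)/(n−1)! ⌉:
for p+1 ≤ i ≤ n−1, C(t+n−1, t+i−1)·C(t+i−2, i−1) ≤ C(n−1, i−1)·ρ, and
for 1 ≤ i ≤ p−1, C(n−1, i)·ρ ≤ C(t+n−1, t+i)·C(t+i−1, i). -/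
theorem stmt_18 (p t : ℕ) (hp : 2 ≤ p) (ht : 1 ≤ t)
    (ρ : ℤ)
    (hρ : ρ = ⌈((∏ j ∈ Finset.range (2 * p) \ {p}, (t + j) : ℕ) : ℚ) /
      ((2 * p - 1).factorial : ℚ)⌉) :
    (∀ i : ℕ, p + 1 ≤ i → i ≤ 2 * p - 1 →
      (((t + 2 * p - 1).choose (t + i - 1) * (t + i - 2).choose (i - 1) : ℕ) : ℤ) ≤
        (((2 * p - 1).choose (i - 1) : ℕ) : ℤ) * ρ) ∧
    (∀ i : ℕ, 1 ≤ i → i ≤ p - 1 →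
      (((2 * p - 1).choose i : ℕ) : ℤ) * ρ ≤
        (((t + 2 * p - 1).choose (t + i) * (t + i - 1).choose i : ℕ) : ℤ)) := by
  obtain ⟨u, rfl⟩ : ∃ u, t = u + 1 := ⟨t - 1, by omega⟩
  obtain ⟨m, rfl⟩ : ∃ m, p = m + 2 := ⟨p - 2, by omega⟩
  clear hp ht
  set N : ℕ := (u + 1) * (u + 2 * m + 4).choose (2 * m + 3) with hN
  -- the product identity
  have hprod : (∏ j ∈ Finset.range (2 * (m + 2)) \ {m + 2}, (u + 1 + j)) * (u + m + 3)
      = N * (2 * m + 3).factorial := by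
    have hmem : (m + 2) ∈ Finset.range (2 * (m + 2)) := by
      simp only [Finset.mem_range]; omega
    have hsd : Finset.range (2 * (m + 2)) \ {m + 2} = (Finset.range (2 * (m + 2))).erase (m + 2) :=
      Finset.sdiff_singleton_eq_erase _ _
    have hme := Finset.mul_prod_erase (Finset.range (2 * (m + 2))) (fun j => u + 1 + j) hmem
    have hfull : ∏ j ∈ Finset.range (2 * (m + 2)), (u + 1 + j) = (u + 1).ascFactorial (2 * m + 4) := by
      rw [show 2 * (m + 2) = 2 * m + 4 from by omega, aux_prod]
    have hasc : (u + 1).ascFactorial (2 * m + 4) = (2 * m + 4).factorial * (u + 2 * m + 4).choose (2 * m + 4) := by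
      have h := Nat.ascFactorial_eq_factorial_mul_choose u (2 * m + 4)
      rw [show u + 2 * m + 4 = u + (2 * m + 4) from by omega]
      exact h
    have hstep : (u + 2 * m + 4).choose (2 * m + 4) * (2 * m + 4)
        = (u + 2 * m + 4).choose (2 * m + 3) * (u + 1) := by
      have h := Nat.choose_succ_right_eq (u + 2 * m + 4) (2 * m + 3)
      rw [show 2 * m + 3 + 1 = 2 * m + 4 from rfl,
        show u + 2 * m + 4 - (2 * m + 3) = u + 1 from by omega] at h
      exact h
    have hfact : (2 * m + 4).factorial = (2 * m + 4) * (2 * m + 3).factorial := by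
      rw [show 2 * m + 4 = (2 * m + 3) + 1 from rfl, Nat.factorial_succ]
    rw [hsd]
    calc (∏ j ∈ (Finset.range (2 * (m + 2))).erase (m + 2), (u + 1 + j)) * (u + m + 3)
        = (u + 1 + (m + 2)) * ∏ j ∈ (Finset.range (2 * (m + 2))).erase (m + 2), (u + 1 + j) := by
          rw [mul_comm]; congr 1 <;> omega
      _ = ∏ j ∈ Finset.range (2 * (m + 2)), (u + 1 + j) := hme
      _ = (2 * m + 4).factorial * (u + 2 * m + 4).choose (2 * m + 4) := by rw [hfull, hasc]
      _ = (2 * m + 3).factorial * ((u + 2 * m + 4).choose (2 * m + 4) * (2 * m + 4)) := by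
          rw [hfact]; ring
      _ = (2 * m + 3).factorial * ((u + 2 * m + 4).choose (2 * m + 3) * (u + 1)) := by rw [hstep]
      _ = N * (2 * m + 3).factorial := by rw [hN]; ring
  -- identify ρ as a ceiling of N/(u+m+3)
  have hq : 2 * (m + 2) - 1 = 2 * m + 3 := by omega
  rw [hq] at hρ
  have hx : (0:ℚ) < ((u + m + 3 : ℕ) : ℚ) := by positivity
  have hceil : ρ = ⌈(N : ℚ) / ((u + m + 3 : ℕ) : ℚ)⌉ := by
    rw [hρ]
    congr 1
    rw [div_eq_div_iff (by positivity) hx.ne']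
    have := congrArg (fun x : ℕ => (x : ℚ)) hprod
    push_cast at this ⊢
    linear_combination this
  have hρnn : 0 ≤ ρ := by
    rw [hceil]; exact Int.ceil_nonneg (by positivity)
  -- upper bound: N ≤ (u+m+3) * ρ
  have hub : (N : ℤ) ≤ ((u : ℤ) + m + 3) * ρ := by
    have h := Int.le_ceil ((N : ℚ) / ((u + m + 3 : ℕ) : ℚ))
    rw [← hceil] at h
    have h2 : (N : ℚ) ≤ (ρ : ℚ) * ((u + m + 3 : ℕ) : ℚ) := (div_le_iff₀ hx).mp h
    have h3 : (N : ℤ) ≤ ρ * ((u + m + 3 : ℕ) : ℤ) := by exact_mod_cast h2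
    push_cast at h3; linarith
  -- lower bound: (u+m+3) * ρ ≤ N + (u+m+2)
  have hlb : ((u : ℤ) + m + 3) * ρ ≤ (N : ℤ) + ((u : ℤ) + m + 2) := by
    have h := Int.ceil_lt_add_one ((N : ℚ) / ((u + m + 3 : ℕ) : ℚ))
    rw [← hceil] at h
    have h2 : ((ρ : ℚ) - 1) * ((u + m + 3 : ℕ) : ℚ) < (N : ℚ) :=
      (lt_div_iff₀ hx).mp (by linarith)
    have h3 : (ρ - 1) * ((u + m + 3 : ℕ) : ℤ) < (N : ℤ) := by exact_mod_cast h2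
    push_cast at h3
    nlinarith [h3]
  -- key lemma: (u+m+2) * ρ ≤ N
  have hkey : ((u : ℤ) + m + 2) * ρ ≤ (N : ℤ) := by
    rcases Nat.eq_zero_or_pos u with hu0 | hu1
    · subst hu0
      have hNval : N = 2 * m + 4 := by
        have h : (0 + 2 * m + 4).choose (2 * m + 3) = 2 * m + 4 := by
          rw [show 0 + 2 * m + 4 = (2 * m + 3) + 1 from by omega, Nat.choose_succ_self_right]
        rw [hN, h]
        omega
      have hρle : ρ ≤ 2 := by
        rw [hceil]
        apply Int.ceil_le.mpr
        rw [div_le_iff₀ hx]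
        have hNQ : (N : ℚ) = 2 * (m : ℚ) + 4 := by exact_mod_cast congrArg (fun x : ℕ => (x : ℚ)) hNval
        rw [hNQ]
        push_cast
        linarith
      have hNZ : (N : ℤ) = 2 * (m : ℤ) + 4 := by exact_mod_cast congrArg (fun x : ℕ => (x : ℤ)) hNval
      push_cast
      nlinarith [hρle, hρnn, hNZ]
    · -- u ≥ 1, show (u+m+2)^2 ≤ N
      have hN2 : ((u : ℤ) + m + 2) ^ 2 ≤ (N : ℤ) := by
        rcases le_or_gt u (m + 1) with hum | hum
        · -- t ≤ p case
          have c1 : (2 * m + 5).choose (2 * m + 3) ≤ (u + 2 * m + 4).choose (2 * m + 3) :=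
            Nat.choose_le_choose _ (by omega)
          have c2 : (2 * m + 5).choose (2 * m + 3) = (2 * m + 5).choose 2 := by
            rw [← Nat.choose_symm (show 2 ≤ 2 * m + 5 by omega)]
            congr 1 <;> omega
          have c3 : (2 * m + 5).choose 2 = (m + 2) * (2 * m + 5) := by
            rw [Nat.choose_two_right, show 2 * m + 5 - 1 = 2 * m + 4 from by omega,
              show (2 * m + 5) * (2 * m + 4) = ((m + 2) * (2 * m + 5)) * 2 from by ring,
              Nat.mul_div_cancel _ (by norm_num)]
          have cN : (u + 1) * ((m + 2) * (2 * m + 5)) ≤ N := by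
            rw [hN]
            apply Nat.mul_le_mul_left
            rw [← c3, ← c2]; exact c1
          have cN' : ((u : ℤ) + 1) * (((m : ℤ) + 2) * (2 * m + 5)) ≤ (N : ℤ) := by
            exact_mod_cast cN
          have hu1' : (1 : ℤ) ≤ u := by exact_mod_cast hu1
          have hum' : (u : ℤ) ≤ (m : ℤ) + 1 := by exact_mod_cast hum
          nlinarith [cN', hu1', hum', sq_nonneg ((u:ℤ) - m - 1)]
        · -- t > p case
          have s1 : (u + 2 * m + 4).choose (2 * m + 3) = (u + 2 * m + 4).choose (u + 1) := by
            rw [← Nat.choose_symm (show u + 1 ≤ u + 2 * m + 4 by omega)]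
            congr 1 <;> omega
          have s2 : (u + 4).choose (u + 1) ≤ (u + 2 * m + 4).choose (u + 1) :=
            Nat.choose_le_choose _ (by omega)
          have s3 : (u + 4).choose (u + 1) = (u + 4).choose 3 := by
            rw [← Nat.choose_symm (show 3 ≤ u + 4 by omega)]
            congr 1 <;> omega
          have s4 : 6 * ((u + 4).choose 3) = (u + 2) * (u + 3) * (u + 4) := by
            have h := Nat.ascFactorial_eq_factorial_mul_choose (u + 1) 3
            rw [show u + 1 + 3 = u + 4 from by omega,
              show Nat.factorial 3 = 6 from rfl] at h
            rw [← h]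
            rw [show (3:ℕ) = 2 + 1 from rfl, Nat.ascFactorial_succ,
              show (2:ℕ) = 1 + 1 from rfl, Nat.ascFactorial_succ,
              show (1:ℕ) = 0 + 1 from rfl, Nat.ascFactorial_succ, Nat.ascFactorial_zero]
            ring
          have cN : (u + 1) * ((u + 4).choose 3) ≤ N := by
            rw [hN]
            apply Nat.mul_le_mul_left
            rw [← s3, s1]; exact s2
          have cN6 : (u + 1) * ((u + 2) * (u + 3) * (u + 4)) ≤ 6 * N := by
            calc (u + 1) * ((u + 2) * (u + 3) * (u + 4)) = 6 * ((u + 1) * ((u + 4).choose 3)) := by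
                  rw [← s4]; ring
              _ ≤ 6 * N := by exact Nat.mul_le_mul_left _ cN
          have cN6' : ((u : ℤ) + 1) * (((u : ℤ) + 2) * ((u : ℤ) + 3) * ((u : ℤ) + 4)) ≤ 6 * (N : ℤ) := by
            exact_mod_cast cN6
          have hu1' : (1 : ℤ) ≤ u := by exact_mod_cast hu1
          have hum' : (m : ℤ) + 1 ≤ (u : ℤ) := by exact_mod_cast (by omega : m + 1 ≤ u)
          nlinarith [cN6', hu1', hum', sq_nonneg ((u:ℤ) - m - 1), mul_nonneg (sub_nonneg.mpr hum') (show (0:ℤ) ≤ 3*u + m + 3 by positivity)]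
      nlinarith [hlb, hN2, hρnn]
  constructor
  · -- part 1
    intro i hi1 hi2
    obtain ⟨k, rfl⟩ : ∃ k, i = k + 1 := ⟨i - 1, by omega⟩
    have hk1 : m + 2 ≤ k := by omega
    have hk2 : k ≤ 2 * m + 2 := by omega
    set d : ℕ := 2 * m + 3 - k with hd
    have hkd : k + d = 2 * m + 3 := by omega
    have hid := aux_id u k d
    rw [show u + k + d + 1 = u + 2 * m + 4 from by omega, hkd] at hid
    -- rewrite goal indices
    rw [show u + 1 + 2 * (m + 2) - 1 = u + 2 * m + 4 from by omega,
      show u + 1 + (k + 1) - 1 = u + k + 1 from by omega,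
      show u + 1 + (k + 1) - 2 = u + k from by omega,
      show 2 * (m + 2) - 1 = 2 * m + 3 from by omega,
      show k + 1 - 1 = k from by omega]
    -- hid : C(u+2m+4, u+k+1) * C(u+k, k) * (u+k+1) = C(2m+3, k) * ((u+1) * C(u+2m+4, 2m+3))
    -- i.e. L * (u+k+1) = C' * N
    have hidZ : ((u + 2 * m + 4).choose (u + k + 1) * (u + k).choose k : ℤ) * ((u : ℤ) + k + 1)
        = ((2 * m + 3).choose k : ℤ) * (N : ℤ) := by
      have := congrArg (fun x : ℕ => (x : ℤ)) hid
      push_cast at this ⊢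
      rw [hN]
      push_cast
      linarith [this]
    have hpos : (0 : ℤ) < (u : ℤ) + k + 1 := by positivity
    apply le_of_mul_le_mul_right _ hpos
    push_cast
    calc ((u + 2 * m + 4).choose (u + k + 1) : ℤ) * ((u + k).choose k : ℤ) * ((u : ℤ) + k + 1)
        = ((2 * m + 3).choose k : ℤ) * (N : ℤ) := by
          have := hidZ; push_cast at this; linarith
      _ ≤ ((2 * m + 3).choose k : ℤ) * (((u : ℤ) + m + 3) * ρ) := by
          apply mul_le_mul_of_nonneg_left hub (by positivity)
      _ ≤ ((2 * m + 3).choose k : ℤ) * (((u : ℤ) + k + 1) * ρ) := by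
          apply mul_le_mul_of_nonneg_left _ (by positivity)
          apply mul_le_mul_of_nonneg_right _ hρnn
          have : (m : ℤ) + 2 ≤ (k : ℤ) := by exact_mod_cast hk1
          linarith
      _ = ((2 * m + 3).choose k : ℤ) * ρ * ((u : ℤ) + k + 1) := by ring
  · -- part 2
    intro i hi1 hi2
    have hi2' : i ≤ m + 1 := by omega
    set d : ℕ := 2 * m + 3 - i with hd
    have hkd : i + d = 2 * m + 3 := by omega
    have hid := aux_id u i d
    rw [show u + i + d + 1 = u + 2 * m + 4 from by omega, hkd] at hid
    rw [show u + 1 + 2 * (m + 2) - 1 = u + 2 * m + 4 from by omega,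
      show u + 1 + i - 1 = u + i from by omega,
      show u + 1 + i = u + i + 1 from by omega,
      show 2 * (m + 2) - 1 = 2 * m + 3 from by omega]
    have hidZ : ((u + 2 * m + 4).choose (u + i + 1) * (u + i).choose i : ℤ) * ((u : ℤ) + i + 1)
        = ((2 * m + 3).choose i : ℤ) * (N : ℤ) := by
      have := congrArg (fun x : ℕ => (x : ℤ)) hid
      push_cast at this ⊢
      rw [hN]
      push_cast
      linarith [this]
    have hpos : (0 : ℤ) < (u : ℤ) + i + 1 := by positivity
    apply le_of_mul_le_mul_right _ hpos
    push_cast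
    calc ((2 * m + 3).choose i : ℤ) * ρ * ((u : ℤ) + i + 1)
        ≤ ((2 * m + 3).choose i : ℤ) * ρ * ((u : ℤ) + m + 2) := by
          apply mul_le_mul_of_nonneg_left _ (mul_nonneg (by positivity) hρnn)
          have : (i : ℤ) ≤ (m : ℤ) + 1 := by exact_mod_cast hi2'
          linarith
      _ = ((2 * m + 3).choose i : ℤ) * (((u : ℤ) + m + 2) * ρ) := by ring
      _ ≤ ((2 * m + 3).choose i : ℤ) * (N : ℤ) := by
          apply mul_le_mul_of_nonneg_left hkey (by positivity)
      _ = ((u + 2 * m + 4).choose (u + i + 1) : ℤ) * ((u + i).choose i : ℤ) * ((u : ℤ) + i + 1) := by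
          have := hidZ; push_cast at this; linarith
end
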